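/- arXiv:1904.07322 — 2 statements merged into one kernel-verified Lean document; each statement's English description precedes it below -/
import Mathlib

section
/- Let A be an abelian category with enough projectives and T a weak tilting subcategory. Then (⊥₁(Fac T), Fac T) is a complete cotorsion pair, and ⊥₁(Fac T) = {X ∈ ⊥₁T : pd X ≤ 1}. If moreover T is tilting, then ⊥₁(Fac T) ∩ Fac T = T. -/
open CategoryTheory Category Limits

attribute [local instance] CategoryTheory.Abelian.hasFiniteBiproducts
attribute [local instance] CategoryTheory.Limits.HasFiniteBiproducts.of_hasFiniteProducts

universe w v u

namespace Paper

variable {A : Type u} [Category.{v} A] [Abelian A]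

/-- `IsSes i p` expresses that `0 ⟶ X ⟶ Y ⟶ Z ⟶ 0` is a short exact sequence. -/
def IsSes {X Y Z : A} (i : X ⟶ Y) (p : Y ⟶ Z) : Prop :=
  ∃ w : i ≫ p = 0, (ShortComplex.mk i p w).ShortExact

/-- `Ext¹(X, Y) = 0`, phrased as: every extension of `X` by `Y` splits. -/
def Ext1Zero (X Y : A) : Prop :=
  ∀ ⦃E : A⦄ (i : Y ⟶ E) (p : E ⟶ X), IsSes i p → ∃ s : X ⟶ E, s ≫ p = 𝟙 X

/-- A torsion pair `(T, F)` of (strictly full) subcategories of an abelian category. -/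
structure IsTorsionPair (T F : Set A) : Prop where
  isoClosed_torsion : ∀ {X Y : A}, (X ≅ Y) → X ∈ T → Y ∈ T
  isoClosed_torsionFree : ∀ {X Y : A}, (X ≅ Y) → X ∈ F → Y ∈ F
  hom_zero : ∀ {X Y : A}, X ∈ T → Y ∈ F → ∀ f : X ⟶ Y, f = 0
  seq : ∀ X : A, ∃ (tX fX : A) (i : tX ⟶ X) (p : X ⟶ fX), tX ∈ T ∧ fX ∈ F ∧ IsSes i p

/-- A (complete) cotorsion pair `(C, D)` in an abelian category. -/
structure IsCotorsionPair (C D : Set A) : Prop where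
  left_eq : C = {X : A | ∀ Y ∈ D, Ext1Zero X Y}
  right_eq : D = {Y : A | ∀ X ∈ C, Ext1Zero X Y}
  seq₁ : ∀ X : A, ∃ (dX cX : A) (i : dX ⟶ cX) (p : cX ⟶ X), dX ∈ D ∧ cX ∈ C ∧ IsSes i p
  seq₂ : ∀ X : A, ∃ (dX cX : A) (i : X ⟶ dX) (p : dX ⟶ cX), dX ∈ D ∧ cX ∈ C ∧ IsSes i p

/-- `f` factors through some object belonging to the class `P`. -/
def FactorsThroughClass (P : Set A) {X Y : A} (f : X ⟶ Y) : Prop :=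
  ∃ (Z : A) (_ : Z ∈ P) (a : X ⟶ Z) (b : Z ⟶ Y), a ≫ b = f

/-- The hom-relation on the full subcategory on `S` identifying two morphisms whose
difference factors through an object of `P`. -/
def quotRel (S P : Set A) : HomRel (ObjectProperty.FullSubcategory (· ∈ S)) :=
  fun {X Y} f g =>
    FactorsThroughClass P ((show X.obj ⟶ Y.obj from f.hom) - (show X.obj ⟶ Y.obj from g.hom))

/-- The additive quotient of the full subcategory on `S` by the morphisms factoring
through objects of `P`. -/
abbrev AddQuot (S P : Set A) := CategoryTheory.Quotient (quotRel S P)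

/-- The subcategory of quotients of (finite direct sums of) objects of `T`. -/
def Fac (T : Set A) : Set A := {X : A | ∃ Y ∈ T, ∃ p : Y ⟶ X, Epi p}

/-- The right `Hom`-orthogonal `T^⊥`. -/
def rightHomPerp (T : Set A) : Set A := {X : A | ∀ Y ∈ T, ∀ f : Y ⟶ X, f = 0}

/-- The left `Hom`-orthogonal `^⊥F`. -/
def leftHomPerp (F : Set A) : Set A := {X : A | ∀ Y ∈ F, ∀ f : X ⟶ Y, f = 0}

/-- The right `Ext¹`-orthogonal `T^{⊥₁}`. -/
def rightExt1Perp (T : Set A) : Set A := {X : A | ∀ Y ∈ T, Ext1Zero Y X}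

/-- The left `Ext¹`-orthogonal `^{⊥₁}D`. -/
def leftExt1Perp (D : Set A) : Set A := {X : A | ∀ Y ∈ D, Ext1Zero X Y}

/-- `X` has projective dimension at most one: it has a length-one projective resolution. -/
def PdLeOne (X : A) : Prop :=
  ∃ (P₁ P₀ : A) (i : P₁ ⟶ P₀) (p : P₀ ⟶ X), Projective P₁ ∧ Projective P₀ ∧ IsSes i p

/-- A weak tilting subcategory of an abelian category with enough projectives. -/
structure IsWeakTilting (T : Set A) : Prop where
  sum_mem : ∀ {X Y : A}, X ∈ T → Y ∈ T → (X ⊞ Y) ∈ T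
  summand_mem : ∀ {X Y : A}, X ∈ T → (∃ (s : Y ⟶ X) (r : X ⟶ Y), s ≫ r = 𝟙 Y) → Y ∈ T
  ext1_zero : ∀ {X Y : A}, X ∈ T → Y ∈ T → Ext1Zero X Y
  pd_le_one : ∀ X ∈ T, PdLeOne X
  coresolution : ∀ P : A, Projective P → ∃ (T₀ T₁ : A) (i : P ⟶ T₀) (p : T₀ ⟶ T₁),
    T₀ ∈ T ∧ T₁ ∈ T ∧ IsSes i p

/-- `φ : X ⟶ E` is a right `T`-approximation of `E`. -/
def IsRightApprox (T : Set A) {X E : A} (φ : X ⟶ E) : Prop :=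
  X ∈ T ∧ ∀ X' ∈ T, ∀ f : X' ⟶ E, ∃ g : X' ⟶ X, g ≫ φ = f

/-- A tilting subcategory: a weak tilting subcategory that is contravariantly finite. -/
structure IsTilting (T : Set A) extends IsWeakTilting T : Prop where
  contravariantly_finite : ∀ E : A, ∃ (X : A) (φ : X ⟶ E), IsRightApprox T φ

/-!
Pushouts and pullbacks of short exact sequences do all the work. Pushing the coresolution
`0 → P → T₀ → T₁ → 0` of a projective `P ↠ Y` out along `P ↠ Y` embeds `Y` into an object
of `Fac T` with cokernel in `T`. This is the second approximation sequence, and it shows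
`T^{⊥₁} ⊆ Fac T`. Pushing it out once more along a syzygy `Ω ↪ P ↠ X` gives the first one,
`0 → E → G → X → 0` with `E ∈ Fac T`, whose middle term is an extension of `T₁` by a projective,
hence lies in `^{⊥₁}(Fac T)` and has projective dimension at most one. For `X ∈ ^{⊥₁}(Fac T)` it
splits, so `X` is a summand of `G` and `pd X ≤ 1` by Schanuel's lemma. Conversely a projective
resolution of length one reduces `Ext¹(X, Fac T) = 0` to `Ext¹(X, T) = 0`. For tilting `T`, the
kernel of a right `T`-approximation of `L ∈ Fac T` lies in `T^{⊥₁}` (Wakamatsu), so when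
`L ∈ ^{⊥₁}(Fac T)` the approximation splits and `L` is a summand of an object of `T`.
-/

namespace IsSes

variable {X Y Z : A} {i : X ⟶ Y} {p : Y ⟶ Z}

lemma w (h : IsSes i p) : i ≫ p = 0 := h.1

lemma mono (h : IsSes i p) : Mono i := h.2.mono_f

lemma epi (h : IsSes i p) : Epi p := h.2.epi_g

lemma exists_lift (h : IsSes i p) {W : A} (k : W ⟶ Y) (hk : k ≫ p = 0) :
    ∃ u : W ⟶ X, u ≫ i = k :=
  have := h.mono
  h.2.exact.lift' k hk

lemma exists_desc (h : IsSes i p) {W : A} (k : Y ⟶ W) (hk : i ≫ k = 0) :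
    ∃ u : Z ⟶ W, p ≫ u = k :=
  have := h.epi
  h.2.exact.desc' k hk

lemma of_exists_lift [Mono i] [Epi p] (w : i ≫ p = 0)
    (hlift : ∀ {W : A} (k : W ⟶ Y), k ≫ p = 0 → ∃ u : W ⟶ X, u ≫ i = k) : IsSes i p :=
  ⟨w, .mk' ((ShortComplex.mk i p w).exact_of_f_is_kernel (KernelFork.IsLimit.ofι' i w
    fun k hk => ⟨(hlift k hk).choose, (hlift k hk).choose_spec⟩)) ‹_› ‹_›⟩

lemma of_exists_desc [Mono i] [Epi p] (w : i ≫ p = 0)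
    (hdesc : ∀ {W : A} (k : Y ⟶ W), i ≫ k = 0 → ∃ u : Z ⟶ W, p ≫ u = k) : IsSes i p :=
  ⟨w, .mk' ((ShortComplex.mk i p w).exact_of_g_is_cokernel (CokernelCofork.IsColimit.ofπ' p w
    fun k hk => ⟨(hdesc k hk).choose, (hdesc k hk).choose_spec⟩)) ‹_› ‹_›⟩

lemma kernel_ι {f : Y ⟶ Z} [Epi f] : IsSes (kernel.ι f) f :=
  of_exists_lift (kernel.condition f) fun k hk => ⟨kernel.lift f k hk, kernel.lift_ι f k hk⟩

lemma comp_iso {Z' : A} (h : IsSes i p) (e : Z ≅ Z') : IsSes i (p ≫ e.hom) :=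
  have := h.mono
  have := h.epi
  of_exists_lift (by rw [← assoc, h.w, zero_comp]) fun k hk =>
    h.exists_lift k (by simpa using hk =≫ e.inv)

lemma biprod_map {X' Y' Z' : A} {i' : X' ⟶ Y'} {p' : Y' ⟶ Z'} (h : IsSes i p)
    (h' : IsSes i' p') : IsSes (biprod.map i i') (biprod.map p p') := by
  have := h.mono; have := h'.mono; have := h.epi; have := h'.epi
  refine of_exists_lift (by ext <;> simp [h.w, h'.w]) fun k hk => ?_
  obtain ⟨u, hu⟩ := h.exists_lift (k ≫ biprod.fst) (by simpa using hk =≫ biprod.fst)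
  obtain ⟨u', hu'⟩ := h'.exists_lift (k ≫ biprod.snd) (by simpa using hk =≫ biprod.snd)
  exact ⟨biprod.lift u u', by ext <;> simp [hu, hu']⟩

lemma exists_retraction (h : IsSes i p) {s : Z ⟶ Y} (hs : s ≫ p = 𝟙 Z) :
    ∃ r : Y ⟶ X, i ≫ r = 𝟙 X :=
  have := h.mono
  ⟨_, (ShortComplex.Splitting.ofExactOfSection _ h.2.exact s hs h.mono).f_r⟩

lemma exists_section (h : IsSes i p) {r : Y ⟶ X} (hr : i ≫ r = 𝟙 X) :
    ∃ s : Z ⟶ Y, s ≫ p = 𝟙 Z :=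
  have := h.epi
  ⟨_, (ShortComplex.Splitting.ofExactOfRetraction _ h.2.exact r hr h.epi).s_g⟩

lemma nonempty_iso_biprod (h : IsSes i p) {s : Z ⟶ Y} (hs : s ≫ p = 𝟙 Z) :
    Nonempty (Y ≅ X ⊞ Z) :=
  have := h.mono
  ⟨(ShortComplex.Splitting.ofExactOfSection _ h.2.exact s hs h.mono).isoBinaryBiproduct⟩

lemma projective_mid [Projective X] [Projective Z] (h : IsSes i p) : Projective Y := by
  have := h.epi
  obtain ⟨e⟩ := h.nonempty_iso_biprod (Projective.factorThru_comp (𝟙 Z) p)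
  exact Projective.of_iso e.symm inferInstance

lemma projective_left [Projective Y] [Projective Z] (h : IsSes i p) : Projective X := by
  have := h.epi
  obtain ⟨r, hr⟩ := h.exists_retraction (Projective.factorThru_comp (𝟙 Z) p)
  exact Retract.projective ⟨i, r, hr⟩

lemma of_isPushout {K B C Y E : A} {a : K ⟶ B} {b : B ⟶ C} (h : IsSes a b) {f : K ⟶ Y}
    {inl : Y ⟶ E} {inr : B ⟶ E} (sq : IsPushout f a inl inr) {q : E ⟶ C}
    (hq₀ : inl ≫ q = 0) (hq : inr ≫ q = b) : IsSes inl q := by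
  have := h.epi
  have : Mono inl :=
    MorphismProperty.IsStableUnderCobaseChange.of_isPushout (P := .monomorphisms A) sq h.mono
  have : Epi q := epi_of_epi_fac hq
  refine of_exists_desc hq₀ fun k hk => ?_
  obtain ⟨v, hv⟩ := h.exists_desc (inr ≫ k) (by rw [← assoc, ← sq.w, assoc, hk, comp_zero])
  exact ⟨v, sq.hom_ext (by simp [reassoc_of% hq₀, hk]) (by rw [reassoc_of% hq, hv])⟩

lemma of_isPullback {E Z' E' : A} {i : X ⟶ E} {p : E ⟶ Z} (h : IsSes i p) {g : Z' ⟶ Z}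
    {t : E' ⟶ E} {q : E' ⟶ Z'} (sq : IsPullback t q p g) {j : X ⟶ E'}
    (hj : j ≫ t = i) (hj₀ : j ≫ q = 0) : IsSes j q := by
  have := h.mono
  have : Epi q :=
    MorphismProperty.IsStableUnderBaseChange.of_isPullback (P := .epimorphisms A) sq h.epi
  have : Mono j := mono_of_mono_fac hj
  refine of_exists_lift hj₀ fun k hk => ?_
  obtain ⟨u, hu⟩ := h.exists_lift (k ≫ t) (by rw [assoc, sq.w, reassoc_of% hk, zero_comp])
  exact ⟨u, sq.hom_ext (by rw [assoc, hj, hu]) (by rw [assoc, hj₀, comp_zero, hk])⟩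

lemma of_isPullback_of_epi {E₁ E X₁ X₂ : A} {t : E₁ ⟶ E} {q : E₁ ⟶ X₁} {p : E ⟶ Y}
    {α : X₁ ⟶ Y} {β : Y ⟶ X₂} (sq : IsPullback t q p α) (h : IsSes α β) [Epi p] :
    IsSes t (p ≫ β) := by
  have := h.mono
  have := h.epi
  have : Mono t := sq.mono_fst_of_mono
  refine of_exists_lift (by rw [reassoc_of% sq.w, h.w, comp_zero]) fun k hk => ?_
  obtain ⟨u, hu⟩ := h.exists_lift (k ≫ p) (by rw [assoc, hk])
  exact ⟨sq.lift k u hu.symm, sq.lift_fst _ _ _⟩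

end IsSes

namespace Ext1Zero

variable {X Y : A}

lemma of_projective [Projective X] : Ext1Zero X Y := fun _ _ p h =>
  have := h.epi
  ⟨Projective.factorThru (𝟙 X) p, Projective.factorThru_comp _ _⟩

lemma exists_retraction (hXY : Ext1Zero X Y) {E : A} {i : Y ⟶ E} {p : E ⟶ X}
    (h : IsSes i p) : ∃ r : E ⟶ Y, i ≫ r = 𝟙 Y :=
  have ⟨_, hs⟩ := hXY i p h
  h.exists_retraction hs

lemma exists_extension (hXY : Ext1Zero X Y) {K P : A} {a : K ⟶ P} {b : P ⟶ X} (h : IsSes a b)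
    (u : K ⟶ Y) : ∃ v : P ⟶ Y, a ≫ v = u := by
  have sq := IsPushout.of_hasPushout u a
  obtain ⟨r, hr⟩ := hXY.exists_retraction (h.of_isPushout sq (pushout.inl_desc _ _ _)
    (pushout.inr_desc (0 : Y ⟶ X) b (by rw [comp_zero, h.w])))
  exact ⟨pushout.inr u a ≫ r, by rw [← assoc, ← sq.w, assoc, hr, comp_id]⟩

lemma of_forall_exists_extension {K P : A} [Projective P] {a : K ⟶ P} {b : P ⟶ X}
    (h : IsSes a b) (hext : ∀ u : K ⟶ Y, ∃ v : P ⟶ Y, a ≫ v = u) : Ext1Zero X Y := by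
  intro E i p hip
  have := hip.epi
  have := h.epi
  let t : P ⟶ E := Projective.factorThru b p
  have ht : t ≫ p = b := Projective.factorThru_comp _ _
  obtain ⟨u, hu⟩ := hip.exists_lift (a ≫ t) (by rw [assoc, ht, h.w])
  obtain ⟨v, hv⟩ := hext u
  obtain ⟨s, hs⟩ := h.exists_desc (t - v ≫ i)
    (by rw [Preadditive.comp_sub, reassoc_of% hv, hu, sub_self])
  refine ⟨s, ?_⟩
  rw [← cancel_epi b, reassoc_of% hs, Preadditive.sub_comp, ht, assoc, hip.w, comp_zero, sub_zero,
    comp_id]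

lemma of_isSes {X₁ X₂ : A} {α : X₁ ⟶ X} {β : X ⟶ X₂} (h : IsSes α β) (h₁ : Ext1Zero X₁ Y)
    (h₂ : Ext1Zero X₂ Y) : Ext1Zero X Y := by
  intro E i p hip
  have := hip.epi
  have sq := IsPullback.of_hasPullback p α
  have hj := pullback.lift_fst (f := p) (g := α) i 0 (by rw [zero_comp, hip.w])
  obtain ⟨r₁, hr₁⟩ := h₁.exists_retraction (hip.of_isPullback sq hj (pullback.lift_snd _ _ _))
  obtain ⟨r, hr⟩ := h₂.exists_extension (IsSes.of_isPullback_of_epi sq h) r₁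
  exact hip.exists_section (r := r) (by rw [← hj, assoc, hr, hr₁])

end Ext1Zero

namespace PdLeOne

lemma of_isSes_of_projective {P G T₁ : A} [Projective P] {g : P ⟶ G} {q : G ⟶ T₁}
    (h : IsSes g q) (hT₁ : PdLeOne T₁) : PdLeOne G := by
  obtain ⟨R₁, R₀, c, r, hR₁, hR₀, hcr⟩ := hT₁
  have sq := IsPullback.of_hasPullback q r
  have : Projective (pullback q r) := (h.of_isPullback sq
    (pullback.lift_fst g 0 (by rw [zero_comp, h.w])) (pullback.lift_snd _ _ _)).projective_mid
  exact ⟨R₁, pullback q r, _, _, hR₁, this, hcr.of_isPullback sq.flip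
    (pullback.lift_snd 0 c (by rw [zero_comp, hcr.w])) (pullback.lift_fst _ _ _)⟩

/-- Schanuel's lemma. -/
lemma projective_of_isSes {X K Q : A} (hX : PdLeOne X) [Projective Q] {k : K ⟶ Q}
    {π : Q ⟶ X} (h : IsSes k π) : Projective K := by
  obtain ⟨P₁, P₀, c, r, hP₁, hP₀, hcr⟩ := hX
  have sq := IsPullback.of_hasPullback r π
  have : Projective (pullback r π) := (hcr.of_isPullback sq
    (pullback.lift_fst c 0 (by rw [zero_comp, hcr.w])) (pullback.lift_snd _ _ _)).projective_mid
  exact (h.of_isPullback sq.flip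
    (pullback.lift_snd 0 k (by rw [zero_comp, h.w])) (pullback.lift_fst _ _ _)).projective_left

lemma of_retract [EnoughProjectives A] {X G : A} (hG : PdLeOne G) (e : Retract X G) :
    PdLeOne X := by
  have : Epi e.r := (⟨⟨⟨e.i, e.retract⟩⟩⟩ : IsSplitEpi e.r).epi
  obtain ⟨f⟩ := (IsSes.kernel_ι (f := e.r)).nonempty_iso_biprod e.retract
  let ΩX := kernel (Projective.π X)
  have h := (IsSes.kernel_ι (f := Projective.π (kernel e.r))).biprod_map
    (IsSes.kernel_ι (f := Projective.π X)) |>.comp_iso f.symm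
  have := hG.projective_of_isSes h
  have : Retract ΩX (kernel (Projective.π (kernel e.r)) ⊞ ΩX) :=
    ⟨biprod.inr, biprod.snd, biprod.inr_snd⟩
  exact ⟨ΩX, _, _, _, this.projective, inferInstance, IsSes.kernel_ι⟩

end PdLeOne

variable {T : Set A}

lemma mem_leftExt1Perp_fac {X : A} (hX : X ∈ leftExt1Perp T) (hpd : PdLeOne X) :
    X ∈ leftExt1Perp (Fac T) := by
  obtain ⟨P₁, P₀, a, b, hP₁, hP₀, h⟩ := hpd
  rintro M ⟨T₀, hT₀, ρ, hρ⟩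
  refine Ext1Zero.of_forall_exists_extension h fun u => ?_
  obtain ⟨v, hv⟩ := (hX T₀ hT₀).exists_extension h (Projective.factorThru u ρ)
  exact ⟨v ≫ ρ, by rw [reassoc_of% hv, Projective.factorThru_comp]⟩

/-- Wakamatsu's lemma. -/
lemma ext1Zero_of_isRightApprox {M X₀ L T' : A} {ι : M ⟶ X₀} {φ : X₀ ⟶ L} (h : IsSes ι φ)
    (hφ : IsRightApprox T φ) (hT' : T' ∈ T) (hX₀ : Ext1Zero T' X₀) : Ext1Zero T' M := by
  intro E i p hip
  have sq := IsPushout.of_hasPushout ι i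
  set q := pushout.desc (f := ι) (g := i) 0 p (by rw [comp_zero, hip.w])
  set q₂ := pushout.desc (f := ι) (g := i) φ 0 (by rw [comp_zero, h.w])
  have hq : pushout.inr ι i ≫ q = p := pushout.inr_desc _ _ _
  have hq₂ : pushout.inl ι i ≫ q₂ = φ := pushout.inl_desc _ _ _
  obtain ⟨s, hs⟩ := hX₀ _ q (hip.of_isPushout sq (pushout.inl_desc _ _ _) hq)
  obtain ⟨θ, hθ⟩ := hφ.2 T' hT' (s ≫ q₂)
  obtain ⟨σ, hσ⟩ := (h.of_isPushout sq.flip (pushout.inr_desc _ _ _) hq₂).exists_lift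
    (s - θ ≫ pushout.inl ι i) (by rw [Preadditive.sub_comp, assoc, hq₂, hθ, sub_self])
  refine ⟨σ, ?_⟩
  rw [← hq, ← assoc, hσ, Preadditive.sub_comp, hs, assoc, pushout.inl_desc, comp_zero, sub_zero]

namespace IsWeakTilting

lemma subset_leftExt1Perp_fac (hT : IsWeakTilting T) : T ⊆ leftExt1Perp (Fac T) := fun X hX =>
  mem_leftExt1Perp_fac (fun _ hY => hT.ext1_zero hX hY) (hT.pd_le_one X hX)

variable [EnoughProjectives A]

lemma exists_isSes_fac_mem (hT : IsWeakTilting T) (Y : A) :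
    ∃ (E T₁ : A) (j : Y ⟶ E) (e : E ⟶ T₁), E ∈ Fac T ∧ T₁ ∈ T ∧ IsSes j e := by
  obtain ⟨T₀, T₁, t, u, hT₀, hT₁, htu⟩ := hT.coresolution (Projective.over Y) inferInstance
  have sq := IsPushout.of_hasPushout (Projective.π Y) t
  exact ⟨_, T₁, _, _, ⟨T₀, hT₀, _, sq.epi_inr_of_epi⟩, hT₁, htu.of_isPushout sq
    (pushout.inl_desc _ _ _) (pushout.inr_desc 0 u (by rw [comp_zero, htu.w]))⟩

lemma mem_fac_of_forall_ext1Zero (hT : IsWeakTilting T) {Y : A}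
    (hY : ∀ T' ∈ T, Ext1Zero T' Y) : Y ∈ Fac T := by
  obtain ⟨E, T₁, j, e, ⟨T₀, hT₀, ρ, hρ⟩, hT₁, h⟩ := hT.exists_isSes_fac_mem Y
  obtain ⟨r, hr⟩ := (hY T₁ hT₁).exists_retraction h
  have : Epi r := (⟨⟨⟨j, hr⟩⟩⟩ : IsSplitEpi r).epi
  exact ⟨T₀, hT₀, ρ ≫ r, epi_comp _ _⟩

lemma exists_isSes_fac_leftExt1Perp (hT : IsWeakTilting T) (X : A) :
    ∃ (E G : A) (j : E ⟶ G) (q : G ⟶ X),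
      E ∈ Fac T ∧ G ∈ leftExt1Perp (Fac T) ∧ PdLeOne G ∧ IsSes j q := by
  let ι := kernel.ι (Projective.π X)
  obtain ⟨E, T₁, f, e, hE, hT₁, hfe⟩ := hT.exists_isSes_fac_mem (kernel (Projective.π X))
  have sq := IsPushout.of_hasPushout f ι
  have hPG := hfe.of_isPushout sq.flip (pushout.inr_desc _ _ _)
    (pushout.inl_desc e 0 (by rw [comp_zero, hfe.w]))
  have hEX := IsSes.kernel_ι.of_isPushout sq (pushout.inl_desc _ _ _)
    (pushout.inr_desc 0 (Projective.π X) (by rw [comp_zero, kernel.condition]))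
  refine ⟨E, _, _, _, hE, fun Y hY => ?_, .of_isSes_of_projective hPG (hT.pd_le_one T₁ hT₁), hEX⟩
  exact Ext1Zero.of_isSes hPG .of_projective (hT.subset_leftExt1Perp_fac hT₁ Y hY)

lemma pdLeOne_of_mem_leftExt1Perp_fac (hT : IsWeakTilting T) {X : A}
    (hX : X ∈ leftExt1Perp (Fac T)) : PdLeOne X := by
  obtain ⟨E, G, j, q, hE, -, hG, h⟩ := hT.exists_isSes_fac_leftExt1Perp X
  obtain ⟨s, hs⟩ := hX E hE j q h
  exact hG.of_retract ⟨s, q, hs⟩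

end IsWeakTilting

lemma IsTilting.leftExt1Perp_fac_inter_fac [EnoughProjectives A] (hT : IsTilting T) :
    leftExt1Perp (Fac T) ∩ Fac T = T := by
  refine subset_antisymm ?_ fun X hX => ⟨hT.subset_leftExt1Perp_fac hX, X, hX, 𝟙 X, inferInstance⟩
  rintro L ⟨hL, S, hS, ρ, hρ⟩
  obtain ⟨X₀, φ, hφ⟩ := hT.contravariantly_finite L
  obtain ⟨g, hg⟩ := hφ.2 S hS ρ
  have : Epi φ := epi_of_epi_fac hg
  have hM : kernel φ ∈ Fac T := hT.mem_fac_of_forall_ext1Zero fun T' hT' =>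
    ext1Zero_of_isRightApprox .kernel_ι hφ hT' (hT.ext1_zero hT' hφ.1)
  obtain ⟨s, hs⟩ := hL _ hM _ _ .kernel_ι
  exact hT.summand_mem hφ.1 ⟨s, φ, hs⟩

/-- For a weak tilting subcategory `T` of an abelian category with
enough projectives, `(^{⊥₁}(Fac T), Fac T)` is a complete cotorsion pair and
`^{⊥₁}(Fac T) = {X ∈ ^{⊥₁}T : pd X ≤ 1}`; if moreover `T` is tilting, then
`^{⊥₁}(Fac T) ∩ Fac T = T`. -/
theorem statement12 [EnoughProjectives A] {T : Set A} (hT : IsWeakTilting T) :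
    IsCotorsionPair (leftExt1Perp (Fac T)) (Fac T) ∧
    leftExt1Perp (Fac T) = {X : A | X ∈ leftExt1Perp T ∧ PdLeOne X} ∧
    (IsTilting T → leftExt1Perp (Fac T) ∩ Fac T = T) := by
  refine ⟨⟨rfl, ?_, fun X => ?_, fun X => ?_⟩, ?_, IsTilting.leftExt1Perp_fac_inter_fac⟩
  · refine subset_antisymm (fun Y hY X hX => hX Y hY) fun Y hY => ?_
    exact hT.mem_fac_of_forall_ext1Zero fun T' hT' => hY T' (hT.subset_leftExt1Perp_fac hT')
  · obtain ⟨E, G, j, q, hE, hG, -, h⟩ := hT.exists_isSes_fac_leftExt1Perp X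
    exact ⟨E, G, j, q, hE, hG, h⟩
  · obtain ⟨E, T₁, j, e, hE, hT₁, h⟩ := hT.exists_isSes_fac_mem X
    exact ⟨E, T₁, j, e, hE, hT.subset_leftExt1Perp_fac hT₁, h⟩
  · refine subset_antisymm (fun X hX => ⟨fun Y hY => hX Y ⟨Y, hY, 𝟙 Y, inferInstance⟩, ?_⟩)
      fun X ⟨hX, hpd⟩ => mem_leftExt1Perp_fac hX hpd
    exact hT.pdLeOne_of_mem_leftExt1Perp_fac hX

end Paper
end

section
/- Let A be an abelian category with enough projectives and (C, T, F) a cotorsion torsion triple. Then C ∩ T is a tilting subcategory of A. -/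
open CategoryTheory Category Limits

attribute [local instance] CategoryTheory.Abelian.hasFiniteBiproducts
attribute [local instance] CategoryTheory.Limits.HasFiniteBiproducts.of_hasFiniteProducts

universe w v u

namespace Paper

variable {A : Type u} [Category.{v} A] [Abelian A]

/-! Objects of `C` have projective dimension at most one: since `T` is closed under quotients and
every object embeds into an object of `T`, the vanishing of `Ext¹(X, T)` for `X ∈ C` forces
`Ext¹(K, -) = 0` on the syzygy `K` of `X`, which is therefore projective. The rest is closure of
`C` and `T` under extensions, sums and summands, together with the approximation sequences of the
cotorsion pair and of the torsion pair. -/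

section ShortExact

variable {X Y Z : A} {i : X ⟶ Y} {p : Y ⟶ Z}

lemma IsSes.w_s13 (h : IsSes i p) : i ≫ p = 0 := h.fst

lemma IsSes.shortExact (h : IsSes i p) : (ShortComplex.mk i p h.w_s13).ShortExact := h.snd

lemma IsSes.mono_s13 (h : IsSes i p) : Mono i := h.shortExact.mono_f

lemma IsSes.epi_s13 (h : IsSes i p) : Epi p := h.shortExact.epi_g

lemma IsSes.exists_lift_s13 (h : IsSes i p) {W : A} (k : W ⟶ Y) (hk : k ≫ p = 0) :
    ∃ l : W ⟶ X, l ≫ i = k :=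
  have := h.mono_s13
  h.shortExact.exact.lift' k hk

lemma IsSes.exists_retraction_of_section (h : IsSes i p) {s : Z ⟶ Y} (hs : s ≫ p = 𝟙 Z) :
    ∃ r : Y ⟶ X, i ≫ r = 𝟙 X :=
  ⟨_, (ShortComplex.Splitting.ofExactOfSection _ h.shortExact.exact s hs h.mono_s13).f_r⟩

lemma IsSes.exists_section_of_retraction (h : IsSes i p) {r : Y ⟶ X} (hr : i ≫ r = 𝟙 X) :
    ∃ s : Z ⟶ Y, s ≫ p = 𝟙 Z :=
  ⟨_, (ShortComplex.Splitting.ofExactOfRetraction _ h.shortExact.exact r hr h.epi_s13).s_g⟩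

lemma isSes_of_exact_up_to_refinements [Mono i] [Epi p] (w_s13 : i ≫ p = 0)
    (h : ∀ ⦃W : A⦄ (y : W ⟶ Y), y ≫ p = 0 →
      ∃ (W' : A) (π : W' ⟶ W) (_ : Epi π) (x : W' ⟶ X), π ≫ y = x ≫ i) :
    IsSes i p :=
  ⟨w_s13, .mk' ((ShortComplex.mk i p w_s13).exact_iff_exact_up_to_refinements.2 h) ‹_› ‹_›⟩

lemma isSes_kernel (p : Y ⟶ Z) [Epi p] : IsSes (kernel.ι p) p :=
  ⟨kernel.condition p,
    .mk' (ShortComplex.exact_of_f_is_kernel _ (kernelIsKernel p)) inferInstance inferInstance⟩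

lemma isSes_cokernel (i : X ⟶ Y) [Mono i] : IsSes i (cokernel.π i) :=
  ⟨cokernel.condition i,
    .mk' (ShortComplex.exact_of_g_is_cokernel _ (cokernelIsCokernel i)) inferInstance inferInstance⟩

lemma IsSes.baseChange (h : IsSes i p) {Z' : A} (f : Z' ⟶ Z) :
    IsSes (pullback.lift i 0 (by simp [h.w_s13]) : X ⟶ pullback p f) (pullback.snd p f) := by
  have := h.mono_s13
  have := h.epi_s13
  have : Mono (pullback.lift i 0 (by simp [h.w_s13]) : X ⟶ pullback p f) :=
    mono_of_mono_fac (pullback.lift_fst _ _ _)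
  refine isSes_of_exact_up_to_refinements (pullback.lift_snd _ _ _) fun W y hy => ?_
  obtain ⟨x, hx⟩ := h.exists_lift_s13 (y ≫ pullback.fst p f) (by
    rw [assoc, pullback.condition, reassoc_of% hy, zero_comp])
  refine ⟨W, 𝟙 W, inferInstance, x, pullback.hom_ext ?_ ?_⟩
  · rw [id_comp, assoc, pullback.lift_fst, hx]
  · rw [id_comp, assoc, pullback.lift_snd, comp_zero, hy]

lemma IsSes.cobaseChange (h : IsSes i p) {X' : A} (f : X ⟶ X') :
    IsSes (pushout.inr i f) (pushout.desc p 0 (by simp [h.w_s13]) : pushout i f ⟶ Z) := by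
  have := h.mono_s13
  have := h.epi_s13
  have : Epi (pushout.desc p 0 (by simp [h.w_s13]) : pushout i f ⟶ Z) :=
    epi_of_epi_fac (pushout.inl_desc _ _ _)
  refine isSes_of_exact_up_to_refinements (pushout.inr_desc _ _ _) fun W y hy => ?_
  obtain ⟨W', π, hπ, y₁, y₂, hy'⟩ :=
    (IsPushout.of_hasPushout i f).hom_eq_add_up_to_refinements y
  obtain ⟨x, hx⟩ := h.exists_lift_s13 y₁ (by
    simpa only [reassoc_of% hy', Preadditive.add_comp, assoc, pushout.inl_desc,
      pushout.inr_desc, comp_zero, add_zero] using π ≫= hy)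
  refine ⟨W', π, hπ, x ≫ f + y₂, ?_⟩
  rw [hy', ← hx, Preadditive.add_comp, assoc, assoc, pushout.condition]

lemma isSes_quotient_of_lift {W E A₀ B C' : A} {w_s13 : W ⟶ E} {q : E ⟶ B} (hζ : IsSes w_s13 q)
    {a : A₀ ⟶ B} {c : B ⟶ C'} (hB : IsSes a c) {v : A₀ ⟶ E} (hv : v ≫ q = a) :
    IsSes (w_s13 ≫ cokernel.π v) (cokernel.desc v (q ≫ c) (by rw [reassoc_of% hv, hB.w_s13])) := by
  have := hζ.mono_s13
  have := hζ.epi_s13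
  have := hB.mono_s13
  have := hB.epi_s13
  have : Mono v := mono_of_mono_fac hv
  have : Mono (w_s13 ≫ cokernel.π v) := by
    refine Preadditive.mono_of_cancel_zero _ fun z hz => ?_
    obtain ⟨y, hy⟩ := (isSes_cokernel v).exists_lift_s13 (z ≫ w_s13) (by simpa using hz)
    have hy0 : y = 0 := by
      rw [← cancel_mono a, ← hv, reassoc_of% hy, hζ.w_s13]; simp
    rw [← cancel_mono w_s13, ← hy, hy0]; simp
  have : Epi (cokernel.desc v (q ≫ c) (by rw [reassoc_of% hv, hB.w_s13])) :=
    epi_of_epi_fac (cokernel.π_desc _ _ _)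
  refine isSes_of_exact_up_to_refinements (by simp [reassoc_of% hζ.w_s13]) fun T x hx => ?_
  obtain ⟨T', π, hπ, z, hz⟩ := surjective_up_to_refinements_of_epi (cokernel.π v) x
  obtain ⟨y, hy⟩ := hB.exists_lift_s13 (z ≫ q) (by
    simpa only [reassoc_of% hz, cokernel.π_desc, assoc, comp_zero] using π ≫= hx)
  obtain ⟨m, hm⟩ := hζ.exists_lift_s13 (z - y ≫ v) (by simp [hy, hv])
  exact ⟨T', π, hπ, m, by rw [hz, reassoc_of% hm]; simp⟩

end ShortExact

section Ext1

variable {X Y W : A}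

lemma Ext1Zero.exists_lift_s13 (hext : Ext1Zero Y W) {E B : A} {w_s13 : W ⟶ E} {q : E ⟶ B}
    (h : IsSes w_s13 q) (f : Y ⟶ B) : ∃ g : Y ⟶ E, g ≫ q = f := by
  obtain ⟨s, hs⟩ := hext _ _ (h.baseChange f)
  exact ⟨s ≫ pullback.fst q f, by rw [assoc, pullback.condition, reassoc_of% hs]⟩

lemma Ext1Zero.exists_extension_s13 (hext : Ext1Zero X W) {K P : A} {ι : K ⟶ P} {π : P ⟶ X}
    (h : IsSes ι π) (u : K ⟶ W) : ∃ g : P ⟶ W, ι ≫ g = u := by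
  obtain ⟨s, hs⟩ := hext _ _ (h.cobaseChange u)
  obtain ⟨r, hr⟩ := (h.cobaseChange u).exists_retraction_of_section hs
  exact ⟨pushout.inl ι u ≫ r, by rw [pushout.condition_assoc, hr, comp_id]⟩

lemma ext1Zero_of_projective [Projective X] : Ext1Zero X W := fun _ _ p h =>
  have := h.epi_s13
  ⟨Projective.factorThru (𝟙 X) p, Projective.factorThru_comp _ _⟩

lemma Ext1Zero.biprod (hX : Ext1Zero X W) (hY : Ext1Zero Y W) : Ext1Zero (X ⊞ Y) W := by
  intro E w_s13 q h
  obtain ⟨gX, hgX⟩ := hX.exists_lift_s13 h biprod.inl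
  obtain ⟨gY, hgY⟩ := hY.exists_lift_s13 h biprod.inr
  exact ⟨biprod.desc gX gY, by ext <;> simp [hgX, hgY]⟩

lemma Ext1Zero.of_retract (hX : Ext1Zero X W) {s : Y ⟶ X} {r : X ⟶ Y} (hsr : s ≫ r = 𝟙 Y) :
    Ext1Zero Y W := by
  intro E w_s13 q h
  obtain ⟨g, hg⟩ := hX.exists_lift_s13 h r
  exact ⟨s ≫ g, by rw [assoc, hg, hsr]⟩

/-- Pulled back to `A₀`, an extension `0 ⟶ W ⟶ E ⟶ B ⟶ 0` splits by some `v : A₀ ⟶ E`; then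
`E / A₀` is an extension of `C'` by `W`, and a retraction of `W ⟶ E / A₀` is one of `W ⟶ E`. -/
lemma Ext1Zero.of_isSes_s13 {A₀ B C' : A} {a : A₀ ⟶ B} {c : B ⟶ C'} (hB : IsSes a c)
    (h₁ : Ext1Zero A₀ W) (h₂ : Ext1Zero C' W) : Ext1Zero B W := by
  intro E w_s13 q hζ
  obtain ⟨v, hv⟩ := h₁.exists_lift_s13 hζ a
  have hquot := isSes_quotient_of_lift hζ hB hv
  obtain ⟨τ, hτ⟩ := h₂ _ _ hquot
  obtain ⟨ρ, hρ⟩ := hquot.exists_retraction_of_section hτ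
  exact hζ.exists_section_of_retraction (r := cokernel.π v ≫ ρ) (by rwa [← assoc])

end Ext1

section TorsionPair

variable {T F : Set A}

lemma IsTorsionPair.mem_of_forall_hom_eq_zero (ht : IsTorsionPair T F) {X : A}
    (hX : ∀ Y ∈ F, ∀ f : X ⟶ Y, f = 0) : X ∈ T := by
  obtain ⟨tX, fX, i, p, htX, hfX, h⟩ := ht.seq X
  have := h.mono_s13
  have : Epi i := h.shortExact.exact.epi_f (hX fX hfX p)
  have : IsIso i := isIso_of_mono_of_epi i
  exact ht.isoClosed_torsion (asIso i) htX

lemma IsTorsionPair.mem_of_epi (ht : IsTorsionPair T F) {X Y : A} (p : X ⟶ Y) [Epi p]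
    (hX : X ∈ T) : Y ∈ T :=
  ht.mem_of_forall_hom_eq_zero fun _ hF f => by
    rw [← cancel_epi p, ht.hom_zero hX hF (p ≫ f), comp_zero]

lemma IsTorsionPair.mem_of_isSes (ht : IsTorsionPair T F) {X Y Z : A} {i : X ⟶ Y}
    {p : Y ⟶ Z} (h : IsSes i p) (hX : X ∈ T) (hZ : Z ∈ T) : Y ∈ T :=
  ht.mem_of_forall_hom_eq_zero fun _ hF f => by
    have := h.epi_s13
    obtain ⟨g, hg⟩ := h.shortExact.exact.desc' f (ht.hom_zero hX hF _)
    rw [← hg, ht.hom_zero hZ hF g, comp_zero]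

lemma IsTorsionPair.biprod_mem (ht : IsTorsionPair T F) {X Y : A} (hX : X ∈ T) (hY : Y ∈ T) :
    (X ⊞ Y) ∈ T :=
  ht.mem_of_forall_hom_eq_zero fun _ hF f => by
    ext
    · simp [ht.hom_zero hX hF (biprod.inl ≫ f)]
    · simp [ht.hom_zero hY hF (biprod.inr ≫ f)]

end TorsionPair

section CotorsionPair

variable {C D : Set A}

lemma IsCotorsionPair.ext1Zero (hcd : IsCotorsionPair C D) {X Y : A} (hX : X ∈ C)
    (hY : Y ∈ D) : Ext1Zero X Y := by
  rw [hcd.left_eq] at hX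
  exact hX Y hY

lemma IsCotorsionPair.mem_left (hcd : IsCotorsionPair C D) {X : A}
    (hX : ∀ Y ∈ D, Ext1Zero X Y) : X ∈ C := by
  rw [hcd.left_eq]
  exact hX

lemma IsCotorsionPair.biprod_mem_left (hcd : IsCotorsionPair C D) {X Y : A} (hX : X ∈ C)
    (hY : Y ∈ C) : (X ⊞ Y) ∈ C :=
  hcd.mem_left fun _ hW => (hcd.ext1Zero hX hW).biprod (hcd.ext1Zero hY hW)

lemma IsCotorsionPair.mem_left_of_retract (hcd : IsCotorsionPair C D) {X Y : A} (hX : X ∈ C)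
    {s : Y ⟶ X} {r : X ⟶ Y} (hsr : s ≫ r = 𝟙 Y) : Y ∈ C :=
  hcd.mem_left fun _ hW => (hcd.ext1Zero hX hW).of_retract hsr

lemma IsCotorsionPair.exists_mono_to_right (hcd : IsCotorsionPair C D) (Y : A) :
    ∃ Z ∈ D, ∃ t : Y ⟶ Z, Mono t := by
  obtain ⟨Z, _, t, _, hZ, _, h⟩ := hcd.seq₂ Y
  exact ⟨Z, hZ, t, h.mono_s13⟩

end CotorsionPair

/-- Embed `E` into `Z ∈ T` by `t`. The pushout `H` of `t` and `b` is a quotient of `Z`, so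
`Ext¹(X, H) = 0` extends `K ⟶ H` to `P`, and projectivity of `P` lifts this extension to
`u : P ⟶ Z`. The restriction of `u` to `K` factors through `t`, and since `K ⟶ H` is mono the
factor is a section of `b`. -/
lemma exists_section_of_epi_onto_syzygy {T : Set A}
    (quot_mem : ∀ {Y Z : A} (p : Y ⟶ Z) [Epi p], Y ∈ T → Z ∈ T)
    (exists_mono : ∀ Y : A, ∃ Z ∈ T, ∃ t : Y ⟶ Z, Mono t) {X : A}
    (hX : ∀ H ∈ T, Ext1Zero X H) {K P : A} {ι : K ⟶ P} {π : P ⟶ X} (hθ : IsSes ι π)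
    [Projective P] {E : A} (b : E ⟶ K) [Epi b] : ∃ s : K ⟶ E, s ≫ b = 𝟙 K := by
  obtain ⟨Z, hZ, t, _⟩ := exists_mono E
  obtain ⟨g, hg⟩ := (hX _ (quot_mem (pushout.inl t b) hZ)).exists_extension_s13 hθ
    (pushout.inr t b)
  obtain ⟨u, hu⟩ := Projective.factors g (pushout.inl t b)
  have hdesc : pushout.inl t b ≫ pushout.desc (cokernel.π t) 0 (by simp) = cokernel.π t :=
    pushout.inl_desc _ _ _
  obtain ⟨s, hs⟩ := (isSes_cokernel t).exists_lift_s13 (ι ≫ u) (by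
    rw [← hdesc, assoc, reassoc_of% hu, reassoc_of% hg, pushout.inr_desc])
  refine ⟨s, ?_⟩
  rw [← cancel_mono (pushout.inr t b), assoc, ← pushout.condition, reassoc_of% hs, hu, hg,
    id_comp]

lemma pdLeOne_of_forall_ext1Zero [EnoughProjectives A] {T : Set A}
    (quot_mem : ∀ {Y Z : A} (p : Y ⟶ Z) [Epi p], Y ∈ T → Z ∈ T)
    (exists_mono : ∀ Y : A, ∃ Z ∈ T, ∃ t : Y ⟶ Z, Mono t) {X : A}
    (hX : ∀ H ∈ T, Ext1Zero X H) : PdLeOne X := by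
  have hθ := isSes_kernel (Projective.π X)
  obtain ⟨s, hs⟩ := exists_section_of_epi_onto_syzygy quot_mem exists_mono hX hθ
    (Projective.π (kernel (Projective.π X)))
  have : Projective (kernel (Projective.π X)) := Retract.projective ⟨s, _, hs⟩
  exact ⟨_, _, _, _, this, inferInstance, hθ⟩

section CotorsionTorsionTriple

variable {C T F : Set A}

/-- The approximation is `C' ⟶ tE ⟶ E`, where `tE ⟶ E` is the torsion part of `E` and
`0 ⟶ T' ⟶ C' ⟶ tE ⟶ 0` is a special `C`-precover of `tE`. -/
lemma exists_isRightApprox (hct : IsCotorsionPair C T) (ht : IsTorsionPair T F) (E : A) :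
    ∃ (X : A) (φ : X ⟶ E), IsRightApprox (C ∩ T) φ := by
  obtain ⟨tE, fE, i, _, htE, hfE, hE⟩ := ht.seq E
  obtain ⟨T', C', _, c, hT', hC', hc⟩ := hct.seq₁ tE
  refine ⟨C', c ≫ i, ⟨hC', ht.mem_of_isSes hc hT' htE⟩, fun X' hX' f => ?_⟩
  obtain ⟨f₁, hf₁⟩ := hE.exists_lift_s13 f (ht.hom_zero hX'.2 hfE _)
  obtain ⟨g, hg⟩ := (hct.ext1Zero hX'.1 hT').exists_lift_s13 hc f₁
  exact ⟨g, by rw [reassoc_of% hg, hf₁]⟩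

lemma exists_coresolution (hct : IsCotorsionPair C T) (ht : IsTorsionPair T F) (P : A)
    [Projective P] : ∃ (T₀ T₁ : A) (i : P ⟶ T₀) (p : T₀ ⟶ T₁),
      T₀ ∈ C ∩ T ∧ T₁ ∈ C ∩ T ∧ IsSes i p := by
  obtain ⟨T₀, T₁, i, p, hT₀, hT₁, h⟩ := hct.seq₂ P
  have := h.epi_s13
  refine ⟨T₀, T₁, i, p, ⟨?_, hT₀⟩, ⟨hT₁, ht.mem_of_epi p hT₀⟩, h⟩
  exact hct.mem_left fun Y hY => .of_isSes h ext1Zero_of_projective (hct.ext1Zero hT₁ hY)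

end CotorsionTorsionTriple

/-- For a cotorsion torsion triple `(C, T, F)` in an abelian
category with enough projectives, `C ∩ T` is a tilting subcategory. -/
theorem statement13 [EnoughProjectives A] {C T F : Set A}
    (hct : IsCotorsionPair C T) (ht : IsTorsionPair T F) :
    IsTilting (C ∩ T) :=
  { sum_mem := fun hX hY => ⟨hct.biprod_mem_left hX.1 hY.1, ht.biprod_mem hX.2 hY.2⟩
    summand_mem := fun hX ⟨_, r, hsr⟩ =>
      have : Epi r := epi_of_epi_fac hsr
      ⟨hct.mem_left_of_retract hX.1 hsr, ht.mem_of_epi r hX.2⟩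
    ext1_zero := fun hX hY => hct.ext1Zero hX.1 hY.2
    pd_le_one := fun _ hX => pdLeOne_of_forall_ext1Zero ht.mem_of_epi hct.exists_mono_to_right
      fun _ => hct.ext1Zero hX.1
    coresolution := fun P _ => exists_coresolution hct ht P
    contravariantly_finite := exists_isRightApprox hct ht }

end Paper
end
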